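/- arXiv:2005.06202 — 3 statements merged into one kernel-verified Lean document; each statement's English description precedes it below -/
import Mathlib

section
/- A signed complete bipartite graph Σ = (K_{n,n}, σ) is balanced if and only if the spectrum of D^max(Σ) (equivalently of D^min(Σ)) is: 3n − 2 with multiplicity 1, n − 2 with multiplicity 1, and −2 with multiplicity 2n − 2. -/
open SimpleGraph

/-- The sign (product of edge signs) of a walk in a graph, computed along its darts. -/
def walkSign {V : Type*} {G : SimpleGraph V} (σ : V → V → ℤ) {u v : V} (p : G.Walk u v) : ℤ :=
  (p.darts.map fun d => σ d.toProd.1 d.toProd.2).prod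

/-- `σ` is a signature on `G`: a symmetric function that is `±1`-valued on edges. -/
def IsSignature {V : Type*} (G : SimpleGraph V) (σ : V → V → ℤ) : Prop :=
  (∀ u v, σ u v = σ v u) ∧ ∀ u v, G.Adj u v → σ u v = 1 ∨ σ u v = -1

/-- A signed graph is balanced when every cycle has sign `+1`. -/
def IsBalanced {V : Type*} (G : SimpleGraph V) (σ : V → V → ℤ) : Prop :=
  ∀ (u : V) (p : G.Walk u u), p.IsCycle → walkSign σ p = 1

/-- A walk is a shortest path when it is a path whose length is the graph distance
between its endpoints. -/
def IsShortestPath {V : Type*} {G : SimpleGraph V} {u v : V} (p : G.Walk u v) : Prop :=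
  p.IsPath ∧ p.length = G.dist u v

open scoped Classical in
/-- `σmax u v = +1` if some shortest `u v`-path is positive, `-1` otherwise. -/
noncomputable def sigmaMax {V : Type*} (G : SimpleGraph V) (σ : V → V → ℤ) (u v : V) : ℤ :=
  if ∃ p : G.Walk u v, IsShortestPath p ∧ walkSign σ p = 1 then 1 else -1

open scoped Classical in
/-- `σmin u v = +1` if all shortest `u v`-paths are positive, `-1` otherwise. -/
noncomputable def sigmaMin {V : Type*} (G : SimpleGraph V) (σ : V → V → ℤ) (u v : V) : ℤ :=
  if ∀ p : G.Walk u v, IsShortestPath p → walkSign σ p = 1 then 1 else -1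

/-- The signed distance matrix `D^max`, with `(u,v)` entry `σmax(u,v)·d(u,v)`. -/
noncomputable def Dmax {V : Type*} (G : SimpleGraph V) (σ : V → V → ℤ) : Matrix V V ℝ :=
  Matrix.of fun u v => (sigmaMax G σ u v : ℝ) * (G.dist u v : ℝ)

/-- The signed distance matrix `D^min`, with `(u,v)` entry `σmin(u,v)·d(u,v)`. -/
noncomputable def Dmin {V : Type*} (G : SimpleGraph V) (σ : V → V → ℤ) : Matrix V V ℝ :=
  Matrix.of fun u v => (sigmaMin G σ u v : ℝ) * (G.dist u v : ℝ)

/-- Two vertices are distance-compatible if all shortest paths between them have the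
same sign. -/
def Compatible {V : Type*} (G : SimpleGraph V) (σ : V → V → ℤ) (u v : V) : Prop :=
  ∀ p q : G.Walk u v, IsShortestPath p → IsShortestPath q → walkSign σ p = walkSign σ q

/-- A signed graph is distance-compatible if every pair of vertices is
distance-compatible. -/
def IsCompatibleGraph {V : Type*} (G : SimpleGraph V) (σ : V → V → ℤ) : Prop :=
  ∀ u v, Compatible G σ u v

/-- The largest eigenvalue of a (symmetric) real matrix: the supremum of the set of real
roots of its characteristic polynomial. -/
noncomputable def largestEigenvalue {n : Type*} [Fintype n] [DecidableEq n]
    (M : Matrix n n ℝ) : ℝ :=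
  sSup {x : ℝ | M.charpoly.IsRoot x}

/-!
Both `D^max` and `D^min` are signed distance matrices `M = (τ(u,v) · d(u,v))` in which `τ(u,v)`
is the sign of some shortest `u`–`v` path. On `K_{n,n}` every such `M` has `tr M = 0` and
`tr M² = ∑ d(u,v)² = 10n² - 8n`, whatever the signs. Hence the spectrum of `M` is the stated one
iff `-2` has multiplicity at least `2n - 2`, i.e. iff `rank (M + 2I) ≤ 2`: the two remaining
eigenvalues are then pinned down by their sum `4n - 4` and their sum of squares.

If `σ` is balanced it has a potential `s`, so `τ(u,v) = s(u) s(v)` and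
`M + 2I = S [[2J, J], [J, 2J]] S` has rank `2`. If `σ` is unbalanced, two vertices `u ≠ v` on the
same side are joined by paths `u w v` and `u w' v` of opposite signs; for the one whose sign is
`-τ(u,v)`, with middle vertex `x`, the principal minor of `M + 2I` on `{u, v, x}` is `-8`, so
`rank (M + 2I) ≥ 3`.
-/

open Unitary

namespace Matrix
variable {m : Type*} [Fintype m]

theorem le_rank_of_det_submatrix_ne_zero {K : Type*} [Field K] {k : Type*} [Fintype k]
    [DecidableEq k] (A : Matrix m m K) (f : k → m) (h : (A.submatrix f f).det ≠ 0) :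
    Fintype.card k ≤ A.rank :=
  calc Fintype.card k = (A.submatrix f f).rank :=
        (rank_of_isUnit _ ((isUnit_iff_isUnit_det _).mpr h.isUnit)).symm
    _ ≤ A.rank := rank_submatrix_le A f f

namespace IsHermitian
variable [DecidableEq m] {M : Matrix m m ℝ} (hM : M.IsHermitian)
include hM

theorem rank_sub_scalar (μ : ℝ) :
    (M - scalar m μ).rank = Fintype.card {i // hM.eigenvalues i ≠ μ} := by
  have hdiag : M - scalar m μ = conjStarAlgAut ℝ _ hM.eigenvectorUnitary
      (diagonal fun i => hM.eigenvalues i - μ) := by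
    conv_lhs => rw [hM.spectral_theorem]
    rw [← diagonal_sub, map_sub, ← scalar_apply, RCLike.ofReal_real_eq_id, Function.id_comp]
    exact congrArg _ (AlgEquivClass.commutes (conjStarAlgAut ℝ _ hM.eigenvectorUnitary) μ).symm
  rw [hdiag, conjStarAlgAut_apply, ← Unitary.coe_star]
  simp [-isUnit_iff_ne_zero, -Unitary.coe_star, rank_diagonal, sub_eq_zero]

theorem count_roots_charpoly (μ : ℝ) :
    M.charpoly.roots.count μ = Fintype.card {i // hM.eigenvalues i = μ} := by
  rw [hM.roots_charpoly_eq_eigenvalues, Multiset.count_map, Fintype.card_subtype]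
  simp [eq_comm, Finset.card_def, Finset.filter_val]

theorem rank_sub_scalar_add_count_roots (μ : ℝ) :
    (M - scalar m μ).rank + M.charpoly.roots.count μ = Fintype.card m := by
  have := Fintype.card_subtype_le fun i => hM.eigenvalues i = μ
  rw [hM.rank_sub_scalar, hM.count_roots_charpoly]
  simp only [ne_eq, Fintype.card_subtype_compl]
  omega

theorem card_roots_charpoly : Multiset.card M.charpoly.roots = Fintype.card m := by
  simp [hM.roots_charpoly_eq_eigenvalues]

theorem sum_sq_roots_charpoly : (M.charpoly.roots.map (· ^ 2)).sum = (M * M).trace := by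
  conv_rhs => rw [hM.spectral_theorem, ← map_mul, conjStarAlgAut_apply, trace_mul_cycle,
    Unitary.coe_star_mul_self, one_mul, diagonal_mul_diagonal, trace_diagonal]
  simp [hM.roots_charpoly_eq_eigenvalues, sq]

end IsHermitian
end Matrix

section SignedGraph
variable {V : Type*} {G : SimpleGraph V} {σ τ : V → V → ℤ}

@[simp] theorem walkSign_nil {u : V} : walkSign σ (Walk.nil : G.Walk u u) = 1 := rfl

@[simp] theorem walkSign_cons {u v w : V} (h : G.Adj u v) (p : G.Walk v w) :
    walkSign σ (Walk.cons h p) = σ u v * walkSign σ p := by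
  simp [walkSign]

theorem walkSign_reverse (hsymm : ∀ u v, σ u v = σ v u) {u v : V} (p : G.Walk u v) :
    walkSign σ p.reverse = walkSign σ p := by
  simp only [walkSign, Walk.darts_reverse, List.map_reverse, List.prod_reverse, List.map_map]
  exact congrArg List.prod (List.map_congr_left fun d _ => hsymm _ _)

namespace IsSignature
variable (hσ : IsSignature G σ)
include hσ

theorem sq_eq_one {u v : V} (h : G.Adj u v) : σ u v ^ 2 = 1 := by
  rcases hσ.2 u v h with h | h <;> simp [h]

theorem mul_symm_eq_one {u v : V} (h : G.Adj u v) : σ u v * σ v u = 1 := by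
  rw [← hσ.1 u v, ← sq, hσ.sq_eq_one h]

theorem walkSign_eq_one_or {u v : V} (p : G.Walk u v) :
    walkSign σ p = 1 ∨ walkSign σ p = -1 := by
  induction p with
  | nil => simp
  | cons h _ ih => rcases hσ.2 _ _ h with h | h <;> rcases ih with ih | ih <;> simp [h, ih]

theorem mul_eq_one_or {u v w : V} (huw : G.Adj u w) (hwv : G.Adj w v) :
    σ u w * σ w v = 1 ∨ σ u w * σ w v = -1 := by
  simpa using hσ.walkSign_eq_one_or (Walk.cons huw (Walk.cons hwv Walk.nil))

end IsSignature

theorem IsShortestPath.reverse {u v : V} {p : G.Walk u v} (hp : IsShortestPath p) :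
    IsShortestPath p.reverse :=
  ⟨hp.1.reverse, by rw [Walk.length_reverse, hp.2, dist_comm]⟩

theorem sigmaMax_symm (hsymm : ∀ u v, σ u v = σ v u) (u v : V) :
    sigmaMax G σ u v = sigmaMax G σ v u := by
  have key : ∀ {x y : V}, (∃ p : G.Walk x y, IsShortestPath p ∧ walkSign σ p = 1) →
      ∃ p : G.Walk y x, IsShortestPath p ∧ walkSign σ p = 1 := fun ⟨p, hp, hs⟩ =>
    ⟨p.reverse, hp.reverse, by rwa [walkSign_reverse hsymm]⟩
  classical
  exact if_congr ⟨key, key⟩ rfl rfl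

theorem sigmaMin_symm (hsymm : ∀ u v, σ u v = σ v u) (u v : V) :
    sigmaMin G σ u v = sigmaMin G σ v u := by
  have key : ∀ {x y : V}, (∀ p : G.Walk x y, IsShortestPath p → walkSign σ p = 1) →
      ∀ p : G.Walk y x, IsShortestPath p → walkSign σ p = 1 := fun h p hp => by
    rw [← walkSign_reverse hsymm]; exact h _ hp.reverse
  classical
  exact if_congr ⟨key, key⟩ rfl rfl

def IsShortestPathSign (G : SimpleGraph V) (σ τ : V → V → ℤ) : Prop :=
  ∀ u v, G.Reachable u v → ∃ p : G.Walk u v, IsShortestPath p ∧ walkSign σ p = τ u v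

theorem isShortestPathSign_sigmaMax (hσ : IsSignature G σ) :
    IsShortestPathSign G σ (sigmaMax G σ) := by
  intro u v huv
  by_cases hpos : ∃ p : G.Walk u v, IsShortestPath p ∧ walkSign σ p = 1
  · rwa [sigmaMax, if_pos hpos]
  · obtain ⟨p, hp, hlen⟩ := huv.exists_path_of_dist
    refine ⟨p, ⟨hp, hlen⟩, ?_⟩
    rw [sigmaMax, if_neg hpos]
    exact (hσ.walkSign_eq_one_or p).resolve_left fun h => hpos ⟨p, ⟨hp, hlen⟩, h⟩

theorem isShortestPathSign_sigmaMin (hσ : IsSignature G σ) :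
    IsShortestPathSign G σ (sigmaMin G σ) := by
  intro u v huv
  by_cases hall : ∀ p : G.Walk u v, IsShortestPath p → walkSign σ p = 1
  · obtain ⟨p, hp, hlen⟩ := huv.exists_path_of_dist
    exact ⟨p, ⟨hp, hlen⟩, by rw [sigmaMin, if_pos hall, hall p ⟨hp, hlen⟩]⟩
  · obtain ⟨p, hp, hneg⟩ : ∃ p : G.Walk u v, IsShortestPath p ∧ walkSign σ p ≠ 1 := by
      simpa using hall
    exact ⟨p, hp, by rw [sigmaMin, if_neg hall]; exact (hσ.walkSign_eq_one_or p).resolve_left hneg⟩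

def IsPotential (G : SimpleGraph V) (σ : V → V → ℤ) (s : V → ℤ) : Prop :=
  (∀ v, s v = 1 ∨ s v = -1) ∧ ∀ u v, G.Adj u v → σ u v = s u * s v

theorem IsPotential.walkSign_eq {s : V → ℤ} (hs : IsPotential G σ s) {u v : V}
    (p : G.Walk u v) : walkSign σ p = s u * s v := by
  induction p with
  | @nil x => rcases hs.1 x with h | h <;> simp [h]
  | @cons x y z h _ ih =>
    rw [walkSign_cons, ih, hs.2 _ _ h]
    rcases hs.1 y with h' | h' <;> simp [h']

theorem IsPotential.isBalanced {s : V → ℤ} (hs : IsPotential G σ s) : IsBalanced G σ := by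
  intro u p _
  rw [hs.walkSign_eq]
  rcases hs.1 u with h | h <;> simp [h]

namespace IsShortestPathSign
variable (hτ : IsShortestPathSign G σ τ)
include hτ

theorem eq_of_adj {u v : V} (h : G.Adj u v) : τ u v = σ u v := by
  obtain ⟨p, ⟨-, hlen⟩, hsign⟩ := hτ u v h.reachable
  rw [dist_eq_one_iff_adj.mpr h] at hlen
  cases p with
  | nil => simp at hlen
  | cons _ q =>
    cases q with
    | nil => simpa using hsign.symm
    | cons _ _ => simp at hlen

theorem eq_mul_of_isPotential {s : V → ℤ} (hs : IsPotential G σ s) {u v : V}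
    (huv : G.Reachable u v) : τ u v = s u * s v := by
  obtain ⟨p, -, hsign⟩ := hτ u v huv
  rw [← hsign, hs.walkSign_eq]

theorem eq_one_or (hσ : IsSignature G σ) {u v : V} (huv : G.Reachable u v) :
    τ u v = 1 ∨ τ u v = -1 := by
  obtain ⟨p, -, hsign⟩ := hτ u v huv
  rw [← hsign]
  exact hσ.walkSign_eq_one_or p

end IsShortestPathSign

theorem dist_eq_two_of_adj_of_adj {u v w : V} (huw : G.Adj u w) (hwv : G.Adj w v) (huv : u ≠ v)
    (hnadj : ¬ G.Adj u v) : G.dist u v = 2 :=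
  le_antisymm (by simpa using dist_le (Walk.cons huw (Walk.cons hwv Walk.nil)))
    ((huw.reachable.trans hwv.reachable).one_lt_dist_of_ne_of_not_adj huv hnadj)

theorem twoPath_sign_eq_of_isBalanced (hσ : IsSignature G σ) (hb : IsBalanced G σ)
    {u v w w' : V} (huw : G.Adj u w) (hwv : G.Adj w v) (huw' : G.Adj u w') (hw'v : G.Adj w' v) :
    σ u w * σ w v = σ u w' * σ w' v := by
  by_cases hww' : w = w'
  · subst hww'; rfl
  by_cases huv : u = v
  · subst huv
    rw [hσ.mul_symm_eq_one huw, hσ.mul_symm_eq_one huw']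
  have hcycle := hb u (Walk.cons huw (Walk.cons hwv (Walk.cons hw'v.symm
    (Walk.cons huw'.symm Walk.nil)))) (by
      simp [Walk.cons_isCycle_iff, Walk.isPath_def, huw.ne.symm, hwv.ne, huw'.ne.symm,
        hw'v.ne.symm, huv, Ne.symm huv, hww'])
  simp only [walkSign_cons, walkSign_nil, mul_one, hσ.1 v w', hσ.1 w' u] at hcycle
  have hsq : (σ u w' * σ w' v) ^ 2 = 1 := by
    rw [mul_pow, hσ.sq_eq_one huw', hσ.sq_eq_one hw'v, one_mul]
  linear_combination (-(σ u w * σ w v)) * hsq + (σ u w' * σ w' v) * hcycle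

/-- `Dmax G σ` and `Dmin G σ` are, by definition, the cases `τ = sigmaMax G σ` and
`τ = sigmaMin G σ`. -/
noncomputable def signedDistMatrix (G : SimpleGraph V) (τ : V → V → ℤ) : Matrix V V ℝ :=
  Matrix.of fun u v => (τ u v : ℝ) * (G.dist u v : ℝ)

theorem isHermitian_signedDistMatrix (hτsymm : ∀ u v, τ u v = τ v u) :
    (signedDistMatrix G τ).IsHermitian := by
  ext u v
  simp [signedDistMatrix, hτsymm u v, dist_comm]

variable [Fintype V]

theorem trace_signedDistMatrix : (signedDistMatrix G τ).trace = 0 := by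
  simp [Matrix.trace, signedDistMatrix]

theorem trace_signedDistMatrix_mul_self (hσ : IsSignature G σ) (hτ : IsShortestPathSign G σ τ)
    (hτsymm : ∀ u v, τ u v = τ v u) :
    (signedDistMatrix G τ * signedDistMatrix G τ).trace = ∑ u, ∑ v, (G.dist u v : ℝ) ^ 2 := by
  refine Finset.sum_congr rfl fun u _ => Finset.sum_congr rfl fun v _ => ?_
  by_cases huv : G.Reachable u v
  · rcases hτ.eq_one_or hσ huv with h | h <;>
      simp [signedDistMatrix, ← hτsymm u v, h, dist_comm (u := v), sq]
  · simp [signedDistMatrix, dist_eq_zero_of_not_reachable huv]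

theorem three_le_rank_signedDistMatrix_sub_scalar [DecidableEq V] (hσ : IsSignature G σ)
    (hτ : IsShortestPathSign G σ τ) (hτsymm : ∀ u v, τ u v = τ v u) {u v x : V}
    (hux : G.Adj u x) (hxv : G.Adj x v) (huv : u ≠ v) (hnadj : ¬ G.Adj u v)
    (hτuv : τ u v = -(σ u x * σ x v)) :
    3 ≤ (signedDistMatrix G τ - Matrix.scalar V (-2 : ℝ)).rank := by
  have hdet : ((signedDistMatrix G τ - Matrix.scalar V (-2 : ℝ)).submatrix
      ![u, v, x] ![u, v, x]).det ≠ 0 := by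
    rw [Matrix.det_fin_three]
    simp [signedDistMatrix, hτsymm v u, hτsymm x u, hτsymm v x, hτ.eq_of_adj hux,
      hτ.eq_of_adj hxv, hτuv, dist_eq_one_iff_adj.mpr hxv, dist_comm (u := v) (v := u),
      dist_comm (u := x) (v := u), dist_comm (u := v) (v := x), dist_eq_one_iff_adj.mpr hux,
      dist_eq_two_of_adj_of_adj hux hxv huv hnadj, huv, Ne.symm huv, hux.ne, hux.ne.symm,
      hxv.ne, hxv.ne.symm]
    rcases hσ.2 u x hux with a | a <;> rcases hσ.2 x v hxv with b | b <;> norm_num [a, b]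
  simpa using Matrix.le_rank_of_det_submatrix_ne_zero _ _ hdet

end SignedGraph

section CompleteBipartite
variable {α β : Type*} [Nonempty α] [Nonempty β] {σ τ : α ⊕ β → α ⊕ β → ℤ}

theorem completeBipartiteGraph_reachable (u v : α ⊕ β) :
    (completeBipartiteGraph α β).Reachable u v := by
  obtain ⟨a⟩ := ‹Nonempty α›
  obtain ⟨b⟩ := ‹Nonempty β›
  have hb : ∀ w, (completeBipartiteGraph α β).Reachable w (Sum.inr b) := by
    rintro (i | j)
    · exact Adj.reachable (by simp)
    · have hja : (completeBipartiteGraph α β).Adj (Sum.inr j) (Sum.inl a) := by simp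
      exact hja.reachable.trans (Adj.reachable (by simp))
  exact (hb u).trans (hb v).symm

theorem exists_isPotential_completeBipartiteGraph
    (hσ : IsSignature (completeBipartiteGraph α β) σ)
    (h : ∀ u v w w', (completeBipartiteGraph α β).Adj u w → (completeBipartiteGraph α β).Adj w v →
      (completeBipartiteGraph α β).Adj u w' → (completeBipartiteGraph α β).Adj w' v →
      σ u w * σ w v = σ u w' * σ w' v) :
    ∃ s, IsPotential (completeBipartiteGraph α β) σ s := by
  obtain ⟨a⟩ := ‹Nonempty α›
  obtain ⟨b⟩ := ‹Nonempty β›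
  have hab := hσ.2 (Sum.inl a) (Sum.inr b) (by simp)
  refine ⟨Sum.elim (fun i => σ (Sum.inl i) (Sum.inr b))
    (fun j => σ (Sum.inl a) (Sum.inr j) * σ (Sum.inl a) (Sum.inr b)), ?_, ?_⟩
  · rintro (i | j)
    · exact hσ.2 _ _ (by simp)
    · rcases hσ.2 (Sum.inl a) (Sum.inr j) (by simp) with h' | h' <;>
        rcases hab with hab | hab <;> simp [h', hab]
  · have key : ∀ i j, σ (Sum.inl i) (Sum.inr j) =
        σ (Sum.inl i) (Sum.inr b) * (σ (Sum.inl a) (Sum.inr j) * σ (Sum.inl a) (Sum.inr b)) := by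
      intro i j
      have hcycle := h (Sum.inr j) (Sum.inr b) (Sum.inl i) (Sum.inl a) (by simp) (by simp)
        (by simp) (by simp)
      rw [hσ.1 (Sum.inr j), hσ.1 (Sum.inr j)] at hcycle
      have hib := hσ.sq_eq_one (u := Sum.inl i) (v := Sum.inr b) (by simp)
      linear_combination σ (Sum.inl i) (Sum.inr b) * hcycle - σ (Sum.inl i) (Sum.inr j) * hib
    rintro (i | j) (i' | j') hadj <;> simp at hadj
    · exact key i j'
    · rw [hσ.1, key, Sum.elim_inl, Sum.elim_inr, mul_comm]

variable [DecidableEq α] [DecidableEq β]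

theorem completeBipartiteGraph_dist (u v : α ⊕ β) :
    (completeBipartiteGraph α β).dist u v =
      if u = v then 0 else if u.isLeft = v.isLeft then 2 else 1 := by
  obtain ⟨a⟩ := ‹Nonempty α›
  obtain ⟨b⟩ := ‹Nonempty β›
  rcases u with i | j <;> rcases v with i' | j'
  · by_cases h : i = i'
    · simp [h]
    · simpa [h] using dist_eq_two_of_adj_of_adj (w := Sum.inr b) (by simp) (by simp)
        (by simpa using h) (by simp)
  · simp
  · simp
  · by_cases h : j = j'
    · simp [h]
    · simpa [h] using dist_eq_two_of_adj_of_adj (w := Sum.inl a) (by simp) (by simp)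
        (by simpa using h) (by simp)

variable [Fintype α] [Fintype β]

theorem sum_sq_dist_completeBipartiteGraph :
    ∑ u, ∑ v, ((completeBipartiteGraph α β).dist u v : ℝ) ^ 2 =
      4 * Fintype.card α * (Fintype.card α - 1) + 2 * Fintype.card α * Fintype.card β
        + 4 * Fintype.card β * (Fintype.card β - 1) := by
  have hsq : ∀ u v : α ⊕ β, ((completeBipartiteGraph α β).dist u v : ℝ) ^ 2 =
      (if u.isLeft = v.isLeft then 4 else 1) - if u = v then 4 else 0 := by
    intro u v
    rw [completeBipartiteGraph_dist]
    split_ifs <;> simp_all; norm_num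
  simp only [hsq, Finset.sum_sub_distrib, Finset.sum_ite_eq, Finset.mem_univ, if_true,
    Fintype.sum_sum_type]
  simp
  ring

theorem rank_signedDistMatrix_completeBipartiteGraph_sub_scalar_le_two {s : α ⊕ β → ℤ}
    (hs : ∀ v, s v = 1 ∨ s v = -1) (hτ : ∀ u v, τ u v = s u * s v) :
    (signedDistMatrix (completeBipartiteGraph α β) τ - Matrix.scalar _ (-2 : ℝ)).rank ≤ 2 := by
  let X : Matrix (α ⊕ β) Bool ℝ := Matrix.of fun u b => if u.isLeft = b then (s u : ℝ) else 0
  let Y : Matrix Bool (α ⊕ β) ℝ := Matrix.of fun b v => s v * if v.isLeft = b then 2 else 1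
  have hXY : signedDistMatrix (completeBipartiteGraph α β) τ - Matrix.scalar _ (-2 : ℝ) =
      X * Y := by
    ext u v
    have hs2 : (s u : ℝ) * s u = 1 := by rcases hs u with h | h <;> simp [h]
    rcases u with i | j <;> rcases v with i' | j' <;>
      simp [X, Y, signedDistMatrix, Matrix.mul_apply, hτ, completeBipartiteGraph_dist,
        Matrix.diagonal_apply] <;>
      split_ifs with h
    all_goals first | ring1 | (subst h; linear_combination -2 * hs2)
  calc _ = (X * Y).rank := by rw [hXY]
    _ ≤ X.rank := Matrix.rank_mul_le_left X Y
    _ ≤ 2 := (Matrix.rank_le_card_width X).trans_eq (by simp)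

theorem isBalanced_completeBipartiteGraph_iff_rank_le_two
    (hσ : IsSignature (completeBipartiteGraph α β) σ)
    (hτ : IsShortestPathSign (completeBipartiteGraph α β) σ τ) (hτsymm : ∀ u v, τ u v = τ v u) :
    IsBalanced (completeBipartiteGraph α β) σ ↔
      (signedDistMatrix (completeBipartiteGraph α β) τ - Matrix.scalar _ (-2 : ℝ)).rank ≤ 2 := by
  constructor
  · intro hb
    obtain ⟨s, hs⟩ := exists_isPotential_completeBipartiteGraph hσ fun _ _ _ _ =>
      twoPath_sign_eq_of_isBalanced hσ hb
    exact rank_signedDistMatrix_completeBipartiteGraph_sub_scalar_le_two hs.1 fun u v =>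
      hτ.eq_mul_of_isPotential hs (completeBipartiteGraph_reachable u v)
  · intro hrank
    by_contra hnb
    obtain ⟨u, v, w, w', huw, hwv, huw', hw'v, hne⟩ : ∃ u v w w',
        (completeBipartiteGraph α β).Adj u w ∧ (completeBipartiteGraph α β).Adj w v ∧
        (completeBipartiteGraph α β).Adj u w' ∧ (completeBipartiteGraph α β).Adj w' v ∧
        σ u w * σ w v ≠ σ u w' * σ w' v := by
      by_contra! h
      exact hnb (exists_isPotential_completeBipartiteGraph hσ h).choose_spec.isBalanced
    have huv : u ≠ v := by
      rintro rfl
      exact hne (by rw [hσ.mul_symm_eq_one huw, hσ.mul_symm_eq_one huw'])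
    have hnadj : ¬ (completeBipartiteGraph α β).Adj u v := by
      rcases u with _ | _ <;> rcases w with _ | _ <;> rcases v with _ | _ <;> simp_all
    obtain ⟨x, hux, hxv, hτuv⟩ : ∃ x, (completeBipartiteGraph α β).Adj u x ∧
        (completeBipartiteGraph α β).Adj x v ∧ τ u v = -(σ u x * σ x v) := by
      by_cases h : τ u v = -(σ u w * σ w v)
      · exact ⟨w, huw, hwv, h⟩
      · refine ⟨w', huw', hw'v, ?_⟩
        rcases hτ.eq_one_or hσ (completeBipartiteGraph_reachable u v) with h1 | h1 <;>
          rcases hσ.mul_eq_one_or huw hwv with h2 | h2 <;>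
          rcases hσ.mul_eq_one_or huw' hw'v with h3 | h3 <;> omega
    have := three_le_rank_signedDistMatrix_sub_scalar hσ hτ hτsymm hux hxv huv hnadj hτuv
    omega

end CompleteBipartite

def knnSpectrum (n : ℕ) : Multiset ℝ :=
  (3 * (n : ℝ) - 2) ::ₘ ((n : ℝ) - 2) ::ₘ Multiset.replicate (2 * n - 2) (-2 : ℝ)

theorem replicate_le_knnSpectrum (n : ℕ) :
    Multiset.replicate (2 * n - 2) (-2 : ℝ) ≤ knnSpectrum n :=
  (Multiset.le_cons_self _ _).trans (Multiset.le_cons_self _ _)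

theorem eq_knnSpectrum_of_moments {n : ℕ} (hn : 0 < n) {s : Multiset ℝ}
    (hcard : Multiset.card s = 2 * n) (hcount : 2 * n - 2 ≤ s.count (-2))
    (hsum : s.sum = 0) (hsq : (s.map (· ^ 2)).sum = 10 * (n : ℝ) ^ 2 - 8 * n) :
    s = knnSpectrum n := by
  obtain ⟨t, rfl⟩ := Multiset.le_iff_exists_add.mp (Multiset.le_count_iff_replicate_le.mp hcount)
  obtain ⟨a, b, rfl⟩ : ∃ a b, t = {a, b} :=
    Multiset.card_eq_two.mp (by simp at hcard; omega)
  have hcast : ((2 * n - 2 : ℕ) : ℝ) = 2 * n - 2 := by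
    rw [Nat.cast_sub (by omega)]; push_cast; ring
  simp only [Multiset.sum_add, Multiset.sum_replicate, Multiset.map_add, Multiset.map_replicate,
    Multiset.insert_eq_cons, Multiset.sum_cons, Multiset.sum_singleton, Multiset.map_cons,
    Multiset.map_singleton, nsmul_eq_mul, hcast] at hsum hsq
  have hroots : (a - (3 * n - 2)) * (a - (n - 2)) = 0 := by
    linear_combination (1 / 2 : ℝ) * hsq + (1 / 2 : ℝ) * (a - b - (4 * n - 4)) * hsum
  rw [knnSpectrum, add_comm, Multiset.insert_eq_cons, Multiset.cons_add, Multiset.singleton_add]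
  rcases mul_eq_zero.mp hroots with ha | ha
  · rw [show a = 3 * n - 2 by linarith, show b = n - 2 by linarith]
  · rw [show a = n - 2 by linarith, show b = 3 * n - 2 by linarith, Multiset.cons_swap]

section Knn
variable {n : ℕ} {σ τ : Fin n ⊕ Fin n → Fin n ⊕ Fin n → ℤ}

theorem roots_signedDistMatrix_knn_eq_knnSpectrum_iff (hn : 0 < n)
    (hσ : IsSignature (completeBipartiteGraph (Fin n) (Fin n)) σ)
    (hτ : IsShortestPathSign (completeBipartiteGraph (Fin n) (Fin n)) σ τ)
    (hτsymm : ∀ u v, τ u v = τ v u) :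
    (signedDistMatrix (completeBipartiteGraph (Fin n) (Fin n)) τ).charpoly.roots = knnSpectrum n ↔
      (signedDistMatrix (completeBipartiteGraph (Fin n) (Fin n)) τ -
        Matrix.scalar _ (-2 : ℝ)).rank ≤ 2 := by
  have : Nonempty (Fin n) := ⟨⟨0, hn⟩⟩
  have hM := isHermitian_signedDistMatrix (G := completeBipartiteGraph (Fin n) (Fin n)) hτsymm
  have hrank := hM.rank_sub_scalar_add_count_roots (-2)
  have hcard : Fintype.card (Fin n ⊕ Fin n) = 2 * n := by simp; ring
  constructor
  · intro h
    have := Multiset.le_count_iff_replicate_le.mpr (replicate_le_knnSpectrum n)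
    rw [h] at hrank
    omega
  · intro h
    apply eq_knnSpectrum_of_moments hn
    · rw [hM.card_roots_charpoly, hcard]
    · omega
    · rw [← Matrix.trace_eq_sum_roots_charpoly_of_splits hM.splits_charpoly,
        trace_signedDistMatrix]
    · rw [hM.sum_sq_roots_charpoly, trace_signedDistMatrix_mul_self hσ hτ hτsymm,
        sum_sq_dist_completeBipartiteGraph]
      simp
      ring

theorem isBalanced_knn_iff_roots_signedDistMatrix_eq_knnSpectrum (hn : 0 < n)
    (hσ : IsSignature (completeBipartiteGraph (Fin n) (Fin n)) σ)
    (hτ : IsShortestPathSign (completeBipartiteGraph (Fin n) (Fin n)) σ τ)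
    (hτsymm : ∀ u v, τ u v = τ v u) :
    IsBalanced (completeBipartiteGraph (Fin n) (Fin n)) σ ↔
      (signedDistMatrix (completeBipartiteGraph (Fin n) (Fin n)) τ).charpoly.roots =
        knnSpectrum n := by
  have : Nonempty (Fin n) := ⟨⟨0, hn⟩⟩
  exact (isBalanced_completeBipartiteGraph_iff_rank_le_two hσ hτ hτsymm).trans
    (roots_signedDistMatrix_knn_eq_knnSpectrum_iff hn hσ hτ hτsymm).symm

end Knn

/-- A signed complete bipartite graph `Σ = (K_{n,n}, σ)` is balanced if
and only if the spectrum of `D^max(Σ)` (equivalently, of `D^min(Σ)`) is: `3n - 2` with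
multiplicity `1`, `n - 2` with multiplicity `1`, and `-2` with multiplicity `2n - 2`. -/
theorem balanced_iff_Knn_distance_spectrum (n : ℕ) (hn : 0 < n)
    (σ : (Fin n ⊕ Fin n) → (Fin n ⊕ Fin n) → ℤ)
    (hσ : IsSignature (completeBipartiteGraph (Fin n) (Fin n)) σ) :
    (IsBalanced (completeBipartiteGraph (Fin n) (Fin n)) σ ↔
      (Dmax (completeBipartiteGraph (Fin n) (Fin n)) σ).charpoly.roots =
        (3 * (n : ℝ) - 2) ::ₘ ((n : ℝ) - 2) ::ₘ
          Multiset.replicate (2 * n - 2) (-2 : ℝ)) ∧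
    (IsBalanced (completeBipartiteGraph (Fin n) (Fin n)) σ ↔
      (Dmin (completeBipartiteGraph (Fin n) (Fin n)) σ).charpoly.roots =
        (3 * (n : ℝ) - 2) ::ₘ ((n : ℝ) - 2) ::ₘ
          Multiset.replicate (2 * n - 2) (-2 : ℝ)) :=
  ⟨isBalanced_knn_iff_roots_signedDistMatrix_eq_knnSpectrum hn hσ (isShortestPathSign_sigmaMax hσ)
      (sigmaMax_symm hσ.1),
    isBalanced_knn_iff_roots_signedDistMatrix_eq_knnSpectrum hn hσ (isShortestPathSign_sigmaMin hσ)
      (sigmaMin_symm hσ.1)⟩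
end

section
/- Let C⁻_n be an unbalanced signed cycle of odd order n = 2k+1 (a cycle whose edge signs have product −1). Then D^max(C⁻_n) = D^min(C⁻_n) = D^±(C⁻_n), and the spectrum of D^±(C⁻_n) consists of the simple eigenvalue k(−1)^k − (1 − (−1)^k)/2 (equal to k if k is even and −(k+1) if k is odd), together with the eigenvalues λ_j = k(−1)^j / sin((2j+1)π/(2n)) − sin²((2j+1)kπ/(2n)) / sin²((2j+1)π/(2n)), each with multiplicity 2, for j = 0, 1, …, k−1. -/
open SimpleGraph

/-!
An unbalanced cycle of odd length `n = 2k + 1` can be switched to the all-negative signature: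
there is `f : V → {±1}` with `σ(a, b) = -f(a) f(b)` on every edge, so a walk of length `ℓ`
from `u` to `v` has sign `(-1)^ℓ f(u) f(v)`. All shortest `u v`-paths therefore have the same
sign, `D^max = D^min = S A S` with `S = diag f` and `A u v = (-1)^{d(u,v)} d(u,v)`, and `A` has
the spectrum of `D^max`. Now `A` is circulant, so its eigenvalues are
`∑_c (-1)^{|c|} |c| ω^{tc}` with `ω = e^{2πi/n}`; pairing `c` with `-c` turns this into
`2 ∑_{m=1}^{k} m cos(2mφ)` for `φ = π/2 - πt/n`, which has the closed form
`k sin(nφ)/sin φ - sin²(kφ)/sin²φ`. The class `t = 0` gives `φ = π/2`, the simple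
eigenvalue, while `t` and `-t` give `±φ_j` with `φ_j = (2j+1)π/(2n)`, whence the
multiplicity two.
-/

open Polynomial Finset Real
open Fin.NatCast Fin.CommRing

section SignedGraph

variable {V : Type*} {G : SimpleGraph V} {σ : V → V → ℤ}

theorem walkSign_eq_of_switching {c : ℤ} {f : V → ℤ} (hf : ∀ x, IsUnit (f x))
    (hσf : ∀ a b, G.Adj a b → σ a b = c * f a * f b) {u v : V} (p : G.Walk u v) :
    walkSign σ p = c ^ p.length * f u * f v := by
  induction p with
  | nil => simp [walkSign, Int.isUnit_mul_self (hf _)]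
  | @cons u w v h q ih =>
    have hcons : walkSign σ (.cons h q) = σ u w * walkSign σ q := by simp [walkSign]
    rw [hcons, ih, hσf u w h, Walk.length_cons]
    linear_combination c ^ (q.length + 1) * f u * f v * Int.isUnit_mul_self (hf w)

theorem sigmaMax_eq_of_forall_isShortestPath (hG : G.Connected) {u v : V} {s : ℤ}
    (hs : IsUnit s) (h : ∀ p : G.Walk u v, IsShortestPath p → walkSign σ p = s) :
    sigmaMax G σ u v = s := by
  obtain ⟨p, hp⟩ := (hG u v).exists_path_of_dist
  rcases Int.isUnit_iff.mp hs with rfl | rfl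
  · exact if_pos ⟨p, hp, h p hp⟩
  · refine if_neg ?_
    rintro ⟨q, hq, hq1⟩
    rw [h q hq] at hq1
    norm_num at hq1

theorem sigmaMin_eq_of_forall_isShortestPath (hG : G.Connected) {u v : V} {s : ℤ}
    (hs : IsUnit s) (h : ∀ p : G.Walk u v, IsShortestPath p → walkSign σ p = s) :
    sigmaMin G σ u v = s := by
  obtain ⟨p, hp⟩ := (hG u v).exists_path_of_dist
  rcases Int.isUnit_iff.mp hs with rfl | rfl
  · exact if_pos h
  · refine if_neg fun hall => ?_
    have h1 := (h p hp).symm.trans (hall p hp)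
    norm_num at h1

section Switching

variable {c : ℤ} {f : V → ℤ} (hG : G.Connected) (hc : IsUnit c) (hf : ∀ x, IsUnit (f x))
  (hσf : ∀ a b, G.Adj a b → σ a b = c * f a * f b)
include hG hc hf hσf

theorem sigmaMax_eq_of_switching (u v : V) : sigmaMax G σ u v = c ^ G.dist u v * f u * f v :=
  sigmaMax_eq_of_forall_isShortestPath hG (((hc.pow _).mul (hf u)).mul (hf v)) fun p hp => by
    rw [walkSign_eq_of_switching hf hσf, hp.2]

theorem sigmaMin_eq_of_switching (u v : V) : sigmaMin G σ u v = c ^ G.dist u v * f u * f v :=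
  sigmaMin_eq_of_forall_isShortestPath hG (((hc.pow _).mul (hf u)).mul (hf v)) fun p hp => by
    rw [walkSign_eq_of_switching hf hσf, hp.2]

theorem Dmax_eq_Dmin_of_switching : Dmax G σ = Dmin G σ := by
  ext u v
  simp only [Dmax, Dmin, Matrix.of_apply, sigmaMax_eq_of_switching hG hc hf hσf,
    sigmaMin_eq_of_switching hG hc hf hσf]

theorem charpoly_Dmax_of_switching [Fintype V] [DecidableEq V] :
    (Dmax G σ).charpoly =
      (Matrix.of fun u v => (c : ℝ) ^ G.dist u v * G.dist u v).charpoly := by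
  set S := Matrix.diagonal fun x => (f x : ℝ)
  have hS : S * S = 1 := by
    rw [Matrix.diagonal_mul_diagonal, ← Matrix.diagonal_one]
    exact congrArg _ (funext fun x => by exact_mod_cast Int.isUnit_mul_self (hf x))
  have hconj : Dmax G σ = S * Matrix.of (fun u v => (c : ℝ) ^ G.dist u v * G.dist u v) * S := by
    ext u v
    simp only [S, Dmax, Matrix.of_apply, Matrix.diagonal_mul, Matrix.mul_diagonal,
      sigmaMax_eq_of_switching hG hc hf hσf]
    push_cast
    ring
  rw [hconj, Matrix.charpoly_mul_comm, ← Matrix.mul_assoc, hS, Matrix.one_mul]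

end Switching

end SignedGraph

section CycleGraph

variable {n : ℕ}

def cycleNorm (x : Fin n) : ℕ := min x.val (-x).val

theorem cycleNorm_neg (x : Fin n) : cycleNorm (-x) = cycleNorm x := by
  rw [cycleNorm, cycleNorm, neg_neg, min_comm]

theorem cycleNorm_add_le (x y : Fin n) : cycleNorm (x + y) ≤ cycleNorm x + cycleNorm y := by
  have hneg (z : Fin n) : (-z).val = if z.val = 0 then 0 else n - z.val := by
    rw [Fin.val_neg']
    split_ifs with hz
    · rw [hz, Nat.sub_zero, Nat.mod_self]
    · exact Nat.mod_eq_of_lt (by omega)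
  have := x.isLt
  have := y.isLt
  simp only [cycleNorm, hneg, Fin.val_add_eq_ite]
  split_ifs <;> omega

variable [NeZero n]

theorem cycleNorm_natCast {m : ℕ} (hm : 2 * m ≤ n) : cycleNorm (m : Fin n) = m := by
  have hn := NeZero.pos n
  rw [cycleNorm, Fin.val_neg', Fin.val_cast_of_lt (by omega)]
  rcases Nat.eq_zero_or_pos m with rfl | hpos
  · simp
  · rw [Nat.mod_eq_of_lt (by omega)]
    omega

theorem cycleNorm_le_length {u v : Fin n} (p : (cycleGraph n).Walk u v) :
    cycleNorm (v - u) ≤ p.length := by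
  induction p with
  | nil => simp [cycleNorm]
  | @cons u w v h q ih =>
    have hstep : cycleNorm (w - u) ≤ 1 := by
      rcases cycleGraph_adj'.mp h with h1 | h1
      · exact (min_le_right _ _).trans (by rw [neg_sub, h1])
      · exact (min_le_left _ _).trans h1.le
    calc cycleNorm (v - u) = cycleNorm ((v - w) + (w - u)) := by rw [sub_add_sub_cancel]
      _ ≤ cycleNorm (v - w) + cycleNorm (w - u) := cycleNorm_add_le _ _
      _ ≤ q.length + 1 := add_le_add ih hstep
      _ = (Walk.cons h q).length := (Walk.length_cons h q).symm

theorem cycleGraph_dist_add_natCast_le (u : Fin n) (m : ℕ) :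
    (cycleGraph n).dist u (u + m) ≤ m := by
  have hG : (cycleGraph n).Connected := { preconnected := cycleGraph_preconnected }
  induction m with
  | zero => simp
  | succ m ih =>
    have hstep : (cycleGraph n).dist (u + m) (u + m + 1) ≤ 1 := by
      rcases eq_or_ne n 1 with rfl | hn
      · rw [Subsingleton.elim (u + m + 1) (u + m), SimpleGraph.dist_self]
        exact zero_le_one
      · refine (dist_eq_one_iff_adj.mpr (cycleGraph_adj'.mpr (Or.inr ?_))).le
        rw [add_sub_cancel_left, Fin.val_one', Nat.one_mod_eq_one.mpr hn]
    calc (cycleGraph n).dist u (u + ↑(m + 1))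
        ≤ (cycleGraph n).dist u (u + m) + (cycleGraph n).dist (u + m) (u + m + 1) := by
          rw [Nat.cast_succ, ← add_assoc]
          exact hG.dist_triangle
      _ ≤ m + 1 := add_le_add ih hstep

theorem cycleGraph_dist (u v : Fin n) : (cycleGraph n).dist u v = cycleNorm (v - u) := by
  refine le_antisymm (le_min ?_ ?_) ?_
  · simpa using cycleGraph_dist_add_natCast_le u (v - u).val
  · rw [dist_comm]
    simpa [neg_sub] using cycleGraph_dist_add_natCast_le v (u - v).val
  · obtain ⟨p, -, hp⟩ := (cycleGraph_preconnected u v).exists_path_of_dist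
    exact hp ▸ cycleNorm_le_length p

theorem cycleGraph_distMatrix_eq_circulant {α : Type*} (F : ℕ → α) :
    Matrix.of (fun u v : Fin n => F ((cycleGraph n).dist u v)) =
      Matrix.circulant fun x => F (cycleNorm x) := by
  ext u v
  rw [Matrix.of_apply, Matrix.circulant_apply, cycleGraph_dist, ← cycleNorm_neg, neg_sub]

end CycleGraph

section OddCycle

variable {k : ℕ}

def arcSign (σ : Fin (2 * k + 1) → Fin (2 * k + 1) → ℤ) (i : ℕ) : ℤ :=
  ∏ m ∈ range i, σ m (m + 1)

theorem cycleGraph_adj_iff (hk : 0 < k) {a b : Fin (2 * k + 1)} :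
    (cycleGraph (2 * k + 1)).Adj a b ↔ b = a + 1 ∨ a = b + 1 := by
  have hone : ((1 : Fin (2 * k + 1)) : ℕ) = 1 := by
    rw [Fin.val_one', Nat.mod_eq_of_lt (by omega)]
  have hval (x : Fin (2 * k + 1)) : x.val = 1 ↔ x = 1 := by rw [Fin.ext_iff, hone]
  rw [cycleGraph_adj', hval, hval, sub_eq_iff_eq_add', sub_eq_iff_eq_add', or_comm]

variable {σ : Fin (2 * k + 1) → Fin (2 * k + 1) → ℤ}
  (hk : 0 < k) (hσ : IsSignature (cycleGraph (2 * k + 1)) σ)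
include hk hσ

theorem isUnit_arcSign (i : ℕ) : IsUnit (arcSign σ i) :=
  IsUnit.prod_iff.mpr fun _ _ =>
    Int.isUnit_iff.mpr (hσ.2 _ _ ((cycleGraph_adj_iff hk).mpr (.inl rfl)))

/-- `arcSign σ (2 * k + 1)` is the sign `e` of the whole cycle; the factor `e ^ a` spreads it
over the `2k + 1` edges, which works because the cycle is odd. -/
theorem sigma_eq_arcSign_mul (a : Fin (2 * k + 1)) :
    σ a (a + 1) = arcSign σ (2 * k + 1) *
      (arcSign σ (2 * k + 1) ^ a.val * arcSign σ a.val) *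
      (arcSign σ (2 * k + 1) ^ (a + 1).val * arcSign σ (a + 1).val) := by
  set e := arcSign σ (2 * k + 1)
  have he := Int.isUnit_mul_self (isUnit_arcSign hk hσ (2 * k + 1))
  have hP := Int.isUnit_mul_self (isUnit_arcSign hk hσ a.val)
  have hstep : arcSign σ (a.val + 1) = arcSign σ a.val * σ a (a + 1) := by
    rw [arcSign, prod_range_succ, Fin.cast_val_eq_self]
    rfl
  rcases (Fin.le_last a).lt_or_eq with hlt | rfl
  · have heven : e ^ (2 * a.val + 2) = 1 := by
      rw [show 2 * a.val + 2 = 2 * (a.val + 1) by ring, pow_mul, sq, he, one_pow]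
    rw [Fin.val_add_one_of_lt hlt, hstep]
    linear_combination (-(σ a (a + 1) * arcSign σ a.val * arcSign σ a.val)) * heven
      - σ a (a + 1) * hP
  · have heven : e ^ (2 * k) = 1 := by rw [pow_mul, sq, he, one_pow]
    have hzero : arcSign σ 0 = 1 := prod_range_zero _
    rw [Fin.last_add_one, Fin.val_last, Fin.val_zero, hzero] at *
    linear_combination (-e * arcSign σ (2 * k)) * heven - arcSign σ (2 * k) * hstep
      - σ (Fin.last (2 * k)) 0 * hP

theorem exists_switching_of_not_isBalanced
    (hunbal : ¬ IsBalanced (cycleGraph (2 * k + 1)) σ) :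
    ∃ f : Fin (2 * k + 1) → ℤ, (∀ x, IsUnit (f x)) ∧
      ∀ a b, (cycleGraph (2 * k + 1)).Adj a b → σ a b = -1 * f a * f b := by
  set e := arcSign σ (2 * k + 1)
  set f : Fin (2 * k + 1) → ℤ := fun x => e ^ x.val * arcSign σ x.val
  have hf (x : Fin (2 * k + 1)) : IsUnit (f x) :=
    ((isUnit_arcSign hk hσ _).pow _).mul (isUnit_arcSign hk hσ _)
  have hedge (a b : Fin (2 * k + 1)) (hab : (cycleGraph (2 * k + 1)).Adj a b) :
      σ a b = e * f a * f b := by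
    rcases (cycleGraph_adj_iff hk).mp hab with rfl | rfl
    · exact sigma_eq_arcSign_mul hk hσ a
    · rw [hσ.1, sigma_eq_arcSign_mul hk hσ b]
      ring
  have he : e = -1 := by
    have hu : IsUnit e := isUnit_arcSign hk hσ _
    refine (Int.isUnit_iff.mp hu).resolve_left fun he => hunbal ?_
    intro u p _
    rw [walkSign_eq_of_switching hf hedge, he, one_pow, one_mul, Int.isUnit_mul_self (hf u)]
  exact ⟨f, hf, he ▸ hedge⟩

end OddCycle

theorem Matrix.vandermonde_mul_circulant {K : Type*} [CommRing K] {n : ℕ} [NeZero n] {ω : K}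
    (hω : ω ^ n = 1) (g : Fin n → K) :
    vandermonde (fun t : Fin n => ω ^ t.val) * circulant g =
      diagonal (fun t : Fin n => ∑ c, g c * ω ^ (t.val * c.val)) *
        vandermonde (fun t : Fin n => ω ^ t.val) := by
  ext t b
  have hpow (c : Fin n) :
      (ω ^ t.val) ^ (c + b).val = (ω ^ t.val) ^ c.val * (ω ^ t.val) ^ b.val := by
    have ht : (ω ^ t.val) ^ n = 1 := by rw [← pow_mul, mul_comm, pow_mul, hω, one_pow]
    rw [Fin.val_add, ← pow_eq_pow_mod _ ht, pow_add]
  rw [diagonal_mul, mul_apply, Finset.sum_mul, ← Equiv.sum_comp (Equiv.addRight b)]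
  refine Finset.sum_congr rfl fun c _ => ?_
  simp only [vandermonde_apply, circulant_apply, Equiv.coe_addRight, add_sub_cancel_right,
    hpow, pow_mul]
  ring

theorem Matrix.charpoly_circulant {K : Type*} [Field K] {n : ℕ} [NeZero n] {ω : K}
    (hω : IsPrimitiveRoot ω n) (g : Fin n → K) :
    (circulant g).charpoly = ∏ t : Fin n, (X - C (∑ c, g c * ω ^ (t.val * c.val))) := by
  set V := vandermonde (fun t : Fin n => ω ^ t.val)
  have hV : IsUnit V.det := by
    refine isUnit_iff_ne_zero.mpr (det_vandermonde_ne_zero_iff.mpr fun i j hij => ?_)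
    exact Fin.ext (hω.pow_inj i.isLt j.isLt hij)
  have hconj : circulant g =
      V⁻¹ * (diagonal (fun t : Fin n => ∑ c, g c * ω ^ (t.val * c.val)) * V) := by
    rw [← vandermonde_mul_circulant hω.pow_eq_one, ← Matrix.mul_assoc,
      nonsing_inv_mul _ hV, Matrix.one_mul]
  rw [hconj, charpoly_mul_comm, Matrix.mul_assoc, mul_nonsing_inv _ hV, Matrix.mul_one,
    charpoly_diagonal]

theorem one_sub_cos_mul_sum_range_mul_cos (k : ℕ) (x : ℝ) :
    (1 - cos x) * ∑ m ∈ range k, (m + 1) * cos ((m + 1) * x) =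
      ((k + 1) * cos (k * x) - k * cos ((k + 1) * x) - 1) / 2 := by
  induction k with
  | zero => simp
  | succ k ih =>
    have hadd : cos ((k + 1 + 1) * x) =
        cos ((k + 1) * x) * cos x - sin ((k + 1) * x) * sin x := by
      rw [← cos_add]; ring_nf
    have hsub : cos (k * x) = cos ((k + 1) * x) * cos x + sin ((k + 1) * x) * sin x := by
      rw [← cos_sub]; ring_nf
    rw [sum_range_succ, mul_add, ih]
    push_cast
    linear_combination ((k + 1) / 2 : ℝ) * hadd + ((k + 1) / 2 : ℝ) * hsub

theorem two_mul_sum_range_mul_cos_two_mul {φ : ℝ} (hφ : sin φ ≠ 0) (k : ℕ) :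
    2 * ∑ m ∈ range k, (m + 1) * cos ((m + 1) * (2 * φ)) =
      k * sin ((2 * k + 1) * φ) / sin φ - sin (k * φ) ^ 2 / sin φ ^ 2 := by
  have hsum := one_sub_cos_mul_sum_range_mul_cos k (2 * φ)
  have hsub : cos (k * (2 * φ)) =
      cos ((2 * k + 1) * φ) * cos φ + sin ((2 * k + 1) * φ) * sin φ := by
    rw [← cos_sub]; ring_nf
  have hadd : cos ((k + 1) * (2 * φ)) =
      cos ((2 * k + 1) * φ) * cos φ - sin ((2 * k + 1) * φ) * sin φ := by
    rw [← cos_add]; ring_nf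
  have hdouble : cos (k * (2 * φ)) = 1 - 2 * sin (k * φ) ^ 2 := by
    rw [show k * (2 * φ) = 2 * (k * φ) by ring, cos_two_mul, cos_sq']
    ring
  rw [hdouble] at hsum hsub
  rw [cos_two_mul, cos_sq'] at hsum
  generalize ∑ m ∈ range k, (m + 1 : ℝ) * cos ((m + 1) * (2 * φ)) = S at hsum ⊢
  have key : 2 * S * sin φ ^ 2 = k * sin ((2 * k + 1) * φ) * sin φ - sin (k * φ) ^ 2 := by
    linear_combination hsum + (k / 2 : ℝ) * hsub - (k / 2 : ℝ) * hadd
  field_simp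
  linear_combination key

theorem Finset.sum_range_two_mul_add_one {M : Type*} [AddCommMonoid M] (f : ℕ → M) (k : ℕ) :
    ∑ i ∈ range (2 * k + 1), f i = f 0 + ∑ m ∈ range k, (f (m + 1) + f (2 * k - m)) := by
  rw [sum_range_succ', two_mul, sum_range_add, ← sum_range_reflect (fun i => f (k + i + 1)) k,
    ← sum_add_distrib, add_comm]
  refine congrArg _ (sum_congr rfl fun m hm => ?_)
  rw [show k + (k - 1 - m) + 1 = k + k - m by have := mem_range.mp hm; omega]

theorem Fin.sum_univ_two_mul_add_one {M : Type*} [AddCommMonoid M] (k : ℕ)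
    (h : Fin (2 * k + 1) → M) :
    ∑ c, h c = h 0 + ∑ m ∈ range k, (h (m + 1 : ℕ) + h (-(m + 1 : ℕ))) := by
  have hneg (m : ℕ) (hm : m ∈ range k) :
      ((2 * k - m : ℕ) : Fin (2 * k + 1)) = -(m + 1 : ℕ) := by
    rw [eq_neg_iff_add_eq_zero, ← Nat.cast_add,
      show 2 * k - m + (m + 1) = 2 * k + 1 by have := mem_range.mp hm; omega, Fin.natCast_self]
  have hrange := Fin.sum_univ_eq_sum_range (fun i => h i) (2 * k + 1)
  simp only [Fin.cast_val_eq_self] at hrange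
  rw [hrange, sum_range_two_mul_add_one, Nat.cast_zero]
  exact congrArg _ (sum_congr rfl fun m hm => by rw [hneg m hm])

theorem Complex.exp_pow_val_add_exp_pow_val_neg {n : ℕ} [NeZero n] (t : ℕ) (x : Fin n) :
    Complex.exp (2 * π * Complex.I / n) ^ (t * x.val) +
        Complex.exp (2 * π * Complex.I / n) ^ (t * (-x).val) =
      ((2 * Real.cos (2 * π * t * x.val / n) : ℝ) : ℂ) := by
  set ω := Complex.exp (2 * π * Complex.I / n)
  have hω : ω ^ n = 1 := (Complex.isPrimitiveRoot_exp n (NeZero.ne n)).pow_eq_one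
  have hpow : ω ^ (t * x.val) = Complex.exp ((2 * π * t * x.val / n : ℝ) * Complex.I) := by
    rw [← Complex.exp_nat_mul]
    push_cast
    ring_nf
  have hinv : ω ^ (t * (-x).val) * ω ^ (t * x.val) = 1 := by
    have hωt : (ω ^ t) ^ n = 1 := by rw [← pow_mul, mul_comm, pow_mul, hω, one_pow]
    rw [← pow_add, ← mul_add, pow_mul, pow_eq_pow_mod _ hωt, ← Fin.val_add, neg_add_cancel,
      Fin.val_zero, pow_zero]
  rw [eq_inv_of_mul_eq_one_left hinv, hpow, ← Complex.exp_neg, ← neg_mul, ← Complex.two_cos,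
    Complex.ofReal_mul, Complex.ofReal_cos]
  push_cast
  ring

noncomputable def oddCycleEigenvalue (k : ℕ) (φ : ℝ) : ℝ :=
  k * sin ((2 * k + 1) * φ) / sin φ - sin (k * φ) ^ 2 / sin φ ^ 2

theorem oddCycleEigenvalue_neg (k : ℕ) (φ : ℝ) :
    oddCycleEigenvalue k (-φ) = oddCycleEigenvalue k φ := by
  simp only [oddCycleEigenvalue, mul_neg, sin_neg, neg_div_neg_eq, neg_sq]

theorem oddCycleEigenvalue_pi_div_two (k : ℕ) :
    oddCycleEigenvalue k (π / 2) = k * (-1) ^ k - (1 - (-1 : ℝ) ^ k) / 2 := by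
  have h1 : (2 * k + 1) * (π / 2) = k * π + π / 2 := by ring
  have h2 : sin (k * (π / 2)) ^ 2 = (1 - (-1) ^ k) / 2 := by
    rw [sin_sq_eq_half_sub, show 2 * (k * (π / 2)) = k * π by ring, cos_nat_mul_pi]
    ring
  rw [oddCycleEigenvalue, h1, sin_add_pi_div_two, cos_nat_mul_pi, h2, sin_pi_div_two]
  ring

theorem oddCycleEigenvalue_angle (k j : ℕ) :
    oddCycleEigenvalue k ((2 * (j : ℝ) + 1) * π / (2 * (2 * (k : ℝ) + 1))) =
      (k : ℝ) * (-1) ^ j / sin ((2 * (j : ℝ) + 1) * π / (2 * (2 * (k : ℝ) + 1))) -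
        sin ((2 * (j : ℝ) + 1) * (k : ℝ) * π / (2 * (2 * (k : ℝ) + 1))) ^ 2 /
          sin ((2 * (j : ℝ) + 1) * π / (2 * (2 * (k : ℝ) + 1))) ^ 2 := by
  have h1 : (2 * k + 1) * ((2 * j + 1) * π / (2 * (2 * k + 1))) = j * π + π / 2 := by
    field_simp
  have h2 : k * ((2 * j + 1) * π / (2 * (2 * k + 1))) =
      (2 * j + 1) * k * π / (2 * (2 * k + 1)) := by ring
  rw [oddCycleEigenvalue, h1, sin_add_pi_div_two, cos_nat_mul_pi, h2]

theorem cos_pi_mul_div_two_mul_add_one_ne_zero (t k : ℕ) : cos (π * t / (2 * k + 1)) ≠ 0 := by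
  intro h
  obtain ⟨m, hm⟩ := Real.cos_eq_zero_iff.mp h
  have hreal : (2 * t : ℝ) = (2 * m + 1) * (2 * k + 1) := by
    field_simp at hm
    linear_combination hm
  have hodd : Odd ((2 * m + 1) * (2 * k + 1) : ℤ) :=
    (odd_two_mul_add_one m).mul (odd_two_mul_add_one (k : ℤ))
  rw [← (by exact_mod_cast hreal : (2 * t : ℤ) = (2 * m + 1) * (2 * k + 1))] at hodd
  exact Int.not_odd_iff_even.mpr (even_two_mul _) hodd

theorem sum_cycleNorm_mul_exp_pow (k : ℕ) (t : Fin (2 * k + 1)) :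
    ∑ c : Fin (2 * k + 1), (((-1 : ℝ) ^ cycleNorm c * cycleNorm c : ℝ) : ℂ) *
        Complex.exp (2 * π * Complex.I / (2 * k + 1 : ℕ)) ^ (t.val * c.val) =
      (oddCycleEigenvalue k (π / 2 - π * t.val / (2 * k + 1)) : ℂ) := by
  set φ := π / 2 - π * t.val / (2 * k + 1)
  have hpair (m : ℕ) (hm : m ∈ range k) :
      (((-1 : ℝ) ^ cycleNorm ((m + 1 : ℕ) : Fin (2 * k + 1)) *
          cycleNorm ((m + 1 : ℕ) : Fin (2 * k + 1)) : ℝ) : ℂ) *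
        Complex.exp (2 * π * Complex.I / (2 * k + 1 : ℕ)) ^
          (t.val * ((m + 1 : ℕ) : Fin (2 * k + 1)).val) +
      (((-1 : ℝ) ^ cycleNorm (-((m + 1 : ℕ) : Fin (2 * k + 1))) *
          cycleNorm (-((m + 1 : ℕ) : Fin (2 * k + 1))) : ℝ) : ℂ) *
        Complex.exp (2 * π * Complex.I / (2 * k + 1 : ℕ)) ^
          (t.val * (-((m + 1 : ℕ) : Fin (2 * k + 1))).val) =
      ((2 * ((m + 1) * cos ((m + 1) * (2 * φ))) : ℝ) : ℂ) := by
    have hmk := mem_range.mp hm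
    rw [cycleNorm_neg, ← mul_add, Complex.exp_pow_val_add_exp_pow_val_neg,
      cycleNorm_natCast (by omega), Fin.val_cast_of_lt (by omega), ← Complex.ofReal_mul]
    congr 1
    have hcos : cos ((m + 1) * (2 * φ)) =
        cos ((m + 1 : ℕ) * π - 2 * π * t * (m + 1 : ℕ) / (2 * k + 1 : ℕ)) := by
      congr 1
      simp only [φ]
      push_cast
      ring
    rw [hcos, cos_nat_mul_pi_sub]
    push_cast
    ring
  rw [Fin.sum_univ_two_mul_add_one, sum_congr rfl hpair]
  simp only [cycleNorm, neg_zero, Fin.val_zero, min_self, pow_zero, Nat.cast_zero, mul_zero,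
    Complex.ofReal_zero, zero_mul, zero_add]
  rw [← Complex.ofReal_sum, ← mul_sum, two_mul_sum_range_mul_cos_two_mul
      (by rw [sin_pi_div_two_sub]; exact cos_pi_mul_div_two_mul_add_one_ne_zero _ _),
    oddCycleEigenvalue]

theorem charpoly_circulant_signedCycleNorm (k : ℕ) :
    (Matrix.circulant fun x : Fin (2 * k + 1) => (-1 : ℝ) ^ cycleNorm x * cycleNorm x).charpoly =
      ∏ t : Fin (2 * k + 1),
        (X - C (oddCycleEigenvalue k (π / 2 - π * t.val / (2 * k + 1)))) := by
  apply Polynomial.map_injective Complex.ofRealHom Complex.ofReal_injective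
  rw [← Matrix.charpoly_map, Matrix.map_circulant,
    Matrix.charpoly_circulant (Complex.isPrimitiveRoot_exp _ (by omega)), Polynomial.map_prod]
  refine prod_congr rfl fun t _ => ?_
  rw [Polynomial.map_sub, map_X, map_C, Complex.ofRealHom_eq_coe, ← sum_cycleNorm_mul_exp_pow]
  rfl

theorem roots_charpoly_circulant_signedCycleNorm (k : ℕ) :
    (Matrix.circulant fun x : Fin (2 * k + 1) =>
        (-1 : ℝ) ^ cycleNorm x * cycleNorm x).charpoly.roots =
      univ.val.map fun t : Fin (2 * k + 1) =>
        oddCycleEigenvalue k (π / 2 - π * t.val / (2 * k + 1)) := by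
  rw [charpoly_circulant_signedCycleNorm, prod_eq_multiset_prod]
  have h := roots_multiset_prod_X_sub_C (univ.val.map fun t : Fin (2 * k + 1) =>
    oddCycleEigenvalue k (π / 2 - π * t.val / (2 * k + 1)))
  rwa [Multiset.map_map] at h

theorem map_univ_oddCycleEigenvalue (k : ℕ) :
    (univ.val.map fun t : Fin (2 * k + 1) =>
        oddCycleEigenvalue k (π / 2 - π * t.val / (2 * k + 1))) =
      oddCycleEigenvalue k (π / 2) ::ₘ ∑ j ∈ range k,
        Multiset.replicate 2 (oddCycleEigenvalue k ((2 * j + 1) * π / (2 * (2 * k + 1)))) := by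
  have hpair (m : ℕ) (hm : m ∈ range k) :
      ({oddCycleEigenvalue k (π / 2 - π * ((m + 1 : ℕ) : Fin (2 * k + 1)).val / (2 * k + 1))} +
        {oddCycleEigenvalue k
          (π / 2 - π * (-((m + 1 : ℕ) : Fin (2 * k + 1))).val / (2 * k + 1))}
          : Multiset ℝ) =
      Multiset.replicate 2
        (oddCycleEigenvalue k ((2 * (k - 1 - m : ℕ) + 1) * π / (2 * (2 * k + 1)))) := by
    have hmk := mem_range.mp hm
    have hval : ((m + 1 : ℕ) : Fin (2 * k + 1)).val = m + 1 := Fin.val_cast_of_lt (by omega)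
    have hnegval : (-((m + 1 : ℕ) : Fin (2 * k + 1))).val = 2 * k - m := by
      rw [Fin.val_neg', hval, Nat.mod_eq_of_lt (by omega)]
      omega
    have hcast : ((k - 1 - m : ℕ) : ℝ) = k - 1 - m := by
      rw [Nat.cast_sub (by omega), Nat.cast_sub (by omega)]
      push_cast
      ring
    have hplus : π / 2 - π * ((m + 1 : ℕ) : ℝ) / (2 * k + 1) =
        (2 * (k - 1 - m : ℕ) + 1) * π / (2 * (2 * k + 1)) := by
      rw [hcast]
      push_cast
      field_simp
      ring
    have hminus : π / 2 - π * ((2 * k - m : ℕ) : ℝ) / (2 * k + 1) =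
        -((2 * (k - 1 - m : ℕ) + 1) * π / (2 * (2 * k + 1))) := by
      rw [hcast, Nat.cast_sub (by omega)]
      push_cast
      field_simp
      ring
    rw [hval, hnegval, hplus, hminus, oddCycleEigenvalue_neg, Multiset.singleton_add]
    rfl
  rw [← Multiset.sum_map_singleton (univ.val.map _), Multiset.map_map, ← sum_eq_multiset_sum]
  simp only [Function.comp_def]
  rw [Fin.sum_univ_two_mul_add_one, sum_congr rfl hpair,
    sum_range_reflect (fun j => Multiset.replicate 2
      (oddCycleEigenvalue k ((2 * (j : ℝ) + 1) * π / (2 * (2 * k + 1))))) k,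
    Fin.val_zero, Nat.cast_zero, mul_zero, zero_div, sub_zero, Multiset.singleton_add]

open Real in
/-- For an unbalanced signed cycle `C⁻_n` of odd order `n = 2k + 1`,
one has `D^max(C⁻_n) = D^min(C⁻_n) = D^±(C⁻_n)`, and the spectrum of `D^±(C⁻_n)`
consists of the simple eigenvalue `k·(-1)^k - (1 - (-1)^k)/2` together with the
eigenvalues
`λ_j = k·(-1)^j / sin((2j+1)π/(2n)) - sin²((2j+1)kπ/(2n)) / sin²((2j+1)π/(2n))`,
each with multiplicity `2`, for `j = 0, 1, …, k - 1`. -/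
theorem unbalanced_odd_cycle_distance_spectrum (k : ℕ) (hk : 0 < k)
    (σ : Fin (2 * k + 1) → Fin (2 * k + 1) → ℤ)
    (hσ : IsSignature (SimpleGraph.cycleGraph (2 * k + 1)) σ)
    (hunbal : ¬ IsBalanced (SimpleGraph.cycleGraph (2 * k + 1)) σ) :
    Dmax (SimpleGraph.cycleGraph (2 * k + 1)) σ =
      Dmin (SimpleGraph.cycleGraph (2 * k + 1)) σ ∧
    (Dmax (SimpleGraph.cycleGraph (2 * k + 1)) σ).charpoly.roots =
      ((k : ℝ) * (-1) ^ k - (1 - (-1 : ℝ) ^ k) / 2) ::ₘ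
        ∑ j ∈ Finset.range k,
          Multiset.replicate 2
            ((k : ℝ) * (-1) ^ j /
                Real.sin ((2 * (j : ℝ) + 1) * π / (2 * (2 * (k : ℝ) + 1))) -
              (Real.sin ((2 * (j : ℝ) + 1) * (k : ℝ) * π /
                  (2 * (2 * (k : ℝ) + 1)))) ^ 2 /
                (Real.sin ((2 * (j : ℝ) + 1) * π / (2 * (2 * (k : ℝ) + 1)))) ^ 2) := by
  obtain ⟨f, hf, hσf⟩ := exists_switching_of_not_isBalanced hk hσ hunbal
  have hG : (cycleGraph (2 * k + 1)).Connected := cycleGraph_connected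
  have hc : IsUnit (-1 : ℤ) := isUnit_one.neg
  refine ⟨Dmax_eq_Dmin_of_switching hG hc hf hσf, ?_⟩
  rw [charpoly_Dmax_of_switching hG hc hf hσf, Int.cast_neg, Int.cast_one,
    cycleGraph_distMatrix_eq_circulant (fun d => (-1 : ℝ) ^ d * d),
    roots_charpoly_circulant_signedCycleNorm, map_univ_oddCycleEigenvalue,
    oddCycleEigenvalue_pi_div_two]
  simp only [oddCycleEigenvalue_angle]
end

section
/- A signed graph Σ with connected underlying simple graph is distance-compatible if and only if every block of Σ is distance-compatible. -/
open SimpleGraph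

/-- A subgraph has no cutvertex when deleting any single vertex leaves it connected
(or empty). -/
def NoCutvertex {V : Type*} {G : SimpleGraph V} (B : G.Subgraph) : Prop :=
  ∀ v ∈ B.verts, B.verts ⊆ {v} ∨ (B.deleteVerts {v}).Connected

/-- A block of a graph: a maximal connected subgraph without a cutvertex. -/
def IsBlock {V : Type*} {G : SimpleGraph V} (B : G.Subgraph) : Prop :=
  B.Connected ∧ NoCutvertex B ∧
    ∀ B' : G.Subgraph, B ≤ B' → B'.Connected → NoCutvertex B' → B' = B

/-!
A shortest path between two vertices of a block `B` stays inside `B`: a detour outside `B` would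
be an ear whose addition keeps `B` free of cutvertices, contradicting maximality. Hence shortest
paths of `B` are exactly the shortest paths of `G` between vertices of `B`, which gives one
direction. Conversely, let `B` be the block of the first edge of a shortest `u`-`v` path and `z`
its last vertex in `B`. Every other shortest `u`-`v` path also leaves `B` for good at `z` (two
different exit points would again give an ear), so cutting both paths at `z` reduces the claim to
a pair of shortest paths inside `B` and a pair of shorter ones.
-/

section

variable {V : Type*} {G : SimpleGraph V}

lemma walkSign_append (σ : V → V → ℤ) {u v w : V} (p : G.Walk u v) (q : G.Walk v w) :
    walkSign σ (p.append q) = walkSign σ p * walkSign σ q := by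
  simp [walkSign, Walk.darts_append]

lemma walkSign_map {V' : Type*} {G' : SimpleGraph V'} (σ : V → V → ℤ) (f : G' →g G) {u v : V'}
    (p : G'.Walk u v) : walkSign σ (p.map f) = walkSign (fun x y => σ (f x) (f y)) p := by
  simp [walkSign, Walk.darts_map, Function.comp_def]

lemma IsShortestPath.of_append {u v w : V} {p : G.Walk u v} {q : G.Walk v w}
    (h : IsShortestPath (p.append q)) : IsShortestPath p ∧ IsShortestPath q := by
  have htri := p.reachable.dist_triangle_left w
  have hp := G.dist_le p
  have hq := G.dist_le q
  have hlen := h.2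
  rw [Walk.length_append] at hlen
  exact ⟨⟨h.1.of_append_left, by omega⟩, ⟨h.1.of_append_right, by omega⟩⟩

namespace SimpleGraph.Walk

lemma exists_eq_append_forall_mem_support_imp_eq {S : Set V} {u v : V} (p : G.Walk u v)
    (h : ∃ t ∈ p.support, t ∈ S) :
    ∃ (z : V) (p₁ : G.Walk u z) (p₂ : G.Walk z v),
      p = p₁.append p₂ ∧ z ∈ S ∧ ∀ t ∈ p₂.support, t ∈ S → t = z := by
  induction p with
  | nil =>
    obtain ⟨t, ht, htS⟩ := h
    rw [support_nil, List.mem_singleton] at ht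
    subst ht
    exact ⟨t, nil, nil, rfl, htS, by simp⟩
  | @cons u a v hua p ih =>
    by_cases h' : ∃ t ∈ p.support, t ∈ S
    · obtain ⟨z, p₁, p₂, rfl, hzS, hp₂⟩ := ih h'
      exact ⟨z, cons hua p₁, p₂, rfl, hzS, hp₂⟩
    · push Not at h'
      have huS : u ∈ S := by
        obtain ⟨t, ht, htS⟩ := h
        rw [support_cons, List.mem_cons] at ht
        rcases ht with rfl | ht
        exacts [htS, absurd htS (h' t ht)]
      refine ⟨u, nil, cons hua p, rfl, huS, fun t ht htS => ?_⟩
      rw [support_cons, List.mem_cons] at ht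
      exact ht.resolve_right fun ht => h' t ht htS

lemma toSubgraph_le_deleteVerts {u v w : V} {p : G.Walk u v} {H : G.Subgraph}
    (h : p.toSubgraph ≤ H) (hw : w ∉ p.support) : p.toSubgraph ≤ H.deleteVerts {w} := by
  have hne : ∀ x ∈ p.toSubgraph.verts, x ≠ w := fun x hx hxw =>
    hw (hxw ▸ (mem_verts_toSubgraph p).mp hx)
  refine ⟨fun x hx => ⟨h.1 hx, hne x hx⟩, fun x y hxy => ?_⟩
  exact Subgraph.deleteVerts_adj.mpr ⟨(h.2 hxy).fst_mem, hne x hxy.fst_mem, (h.2 hxy).snd_mem,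
    hne y hxy.snd_mem, h.2 hxy⟩

lemma exists_map_hom_eq {H : G.Subgraph} {u v : V} (p : G.Walk u v) (hp : p.toSubgraph ≤ H)
    (hu : u ∈ H.verts) (hv : v ∈ H.verts) :
    ∃ q : H.coe.Walk ⟨u, hu⟩ ⟨v, hv⟩, q.map H.hom = p :=
  ⟨p.mapToSubgraph.map (Subgraph.inclusion hp), (map_map _ _ _).trans p.map_mapToSubgraph_hom⟩

lemma IsPath.exists_walk_to_end_avoiding {x y t v : V} {π : G.Walk x y} (hπ : π.IsPath)
    (ht : t ∈ π.support) (hvt : v ≠ t) :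
    ∃ w ∈ ({x, y} : Set V), ∃ p : G.Walk t w, p.toSubgraph ≤ π.toSubgraph ∧ v ∉ p.support := by
  obtain ⟨q, r, rfl⟩ := Walk.mem_support_iff_exists_append.mp ht
  rw [toSubgraph_append]
  by_cases hvq : v ∈ q.support
  · exact ⟨y, by simp, r, le_sup_right, fun hvr => hπ.ne_of_mem_support_of_append hvt hvq hvr rfl⟩
  · exact ⟨x, by simp, q.reverse, by rw [toSubgraph_reverse]; exact le_sup_left,
      by rwa [support_reverse, List.mem_reverse]⟩

end SimpleGraph.Walk

namespace SimpleGraph.Subgraph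

lemma connected_of_forall_exists_walk_subgraph_to {H K : G.Subgraph} (hK : K.Connected)
    (hKH : K ≤ H) (h : ∀ t ∈ H.verts, ∃ s ∈ K.verts, ∃ p : G.Walk t s, p.toSubgraph ≤ H) :
    H.Connected := by
  rw [connected_iff_forall_exists_walk_subgraph]
  refine ⟨hK.nonempty.mono hKH.1, fun {t₁ t₂} ht₁ ht₂ => ?_⟩
  obtain ⟨s₁, hs₁, p₁, hp₁⟩ := h t₁ ht₁
  obtain ⟨s₂, hs₂, p₂, hp₂⟩ := h t₂ ht₂
  obtain ⟨r, hr⟩ := (connected_iff_forall_exists_walk_subgraph K).mp hK |>.2 hs₁ hs₂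
  refine ⟨p₁.append (r.append p₂.reverse), ?_⟩
  simp only [Walk.toSubgraph_append, Walk.toSubgraph_reverse]
  exact sup_le hp₁ (sup_le (hr.trans hKH) hp₂)

lemma exists_mem_verts_of_isChain {c : Set G.Subgraph} (hc : IsChain (· ≤ ·) c) {x y : V}
    (hx : x ∈ (sSup c).verts) (hy : y ∈ (sSup c).verts) :
    ∃ H ∈ c, x ∈ H.verts ∧ y ∈ H.verts := by
  rw [verts_sSup, Set.mem_iUnion₂] at hx hy
  obtain ⟨H₁, hH₁, hx⟩ := hx
  obtain ⟨H₂, hH₂, hy⟩ := hy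
  rcases hc.total hH₁ hH₂ with h | h
  exacts [⟨H₂, hH₂, h.1 hx, hy⟩, ⟨H₁, hH₁, hx, h.1 hy⟩]

lemma connected_sSup_of_isChain {c : Set G.Subgraph} (hc : IsChain (· ≤ ·) c) (hne : c.Nonempty)
    (hconn : ∀ H ∈ c, H.Connected) : (sSup c).Connected := by
  rw [connected_iff_forall_exists_walk_subgraph]
  obtain ⟨H₀, hH₀⟩ := hne
  refine ⟨(hconn H₀ hH₀).nonempty.mono (le_sSup hH₀).1, fun {t₁ t₂} ht₁ ht₂ => ?_⟩
  obtain ⟨H, hH, ht₁, ht₂⟩ := exists_mem_verts_of_isChain hc ht₁ ht₂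
  obtain ⟨p, hp⟩ := (connected_iff_forall_exists_walk_subgraph H).mp (hconn H hH) |>.2 ht₁ ht₂
  exact ⟨p, hp.trans (le_sSup hH)⟩

end SimpleGraph.Subgraph

lemma NoCutvertex.connected_deleteVerts {B : G.Subgraph} (hNC : NoCutvertex B)
    (hB : B.Connected) {v : V} (hv : ¬B.verts ⊆ {v}) : (B.deleteVerts {v}).Connected := by
  by_cases hvB : v ∈ B.verts
  · exact (hNC v hvB).resolve_left hv
  · rwa [← Subgraph.deleteVerts_inter_verts_left_eq, Set.inter_singleton_eq_empty.mpr hvB,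
      Subgraph.deleteVerts_empty]

lemma NoCutvertex.sup_toSubgraph {B : G.Subgraph} (hNC : NoCutvertex B) (hB : B.Connected)
    {x y : V} (hx : x ∈ B.verts) (hy : y ∈ B.verts) (hxy : x ≠ y) {π : G.Walk x y}
    (hπ : π.IsPath) : NoCutvertex (B ⊔ π.toSubgraph) := by
  intro v _
  right
  refine Subgraph.connected_of_forall_exists_walk_subgraph_to
    (hNC.connected_deleteVerts hB fun h => hxy ((h hx).trans (h hy).symm))
    (Subgraph.deleteVerts_mono le_sup_left) ?_
  rintro t ⟨htB | htπ, htv⟩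
  · exact ⟨t, ⟨htB, htv⟩, Walk.nil, by simpa using ⟨Or.inl htB, htv⟩⟩
  · obtain ⟨w, hw, p, hpπ, hvp⟩ :=
      hπ.exists_walk_to_end_avoiding ((Walk.mem_verts_toSubgraph π).mp htπ) (Ne.symm htv)
    have hwB : w ∈ B.verts := by rcases hw with rfl | rfl <;> assumption
    exact ⟨w, ⟨hwB, fun h => hvp (h ▸ p.end_mem_support)⟩, p,
      Walk.toSubgraph_le_deleteVerts (hpπ.trans le_sup_right) hvp⟩

lemma noCutvertex_subgraphOfAdj {x y : V} (h : G.Adj x y) : NoCutvertex (G.subgraphOfAdj h) := by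
  intro v hv
  right
  obtain ⟨o, ho⟩ : ∃ o, ((G.subgraphOfAdj h).deleteVerts {v}).verts = {o} := by
    rcases hv with rfl | rfl
    · exact ⟨y, by simp [h.ne.symm]⟩
    · exact ⟨x, by simp [h.ne]⟩
  exact Subgraph.singletonSubgraph_connected.mono
    ((singletonSubgraph_le_iff o _).mpr (ho ▸ rfl)) (by rw [ho]; rfl)

lemma noCutvertex_sSup_of_isChain {c : Set G.Subgraph} (hc : IsChain (· ≤ ·) c)
    (hconn : ∀ H ∈ c, H.Connected) (hNC : ∀ H ∈ c, NoCutvertex H) : NoCutvertex (sSup c) := by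
  intro v _
  by_cases hv : (sSup c).verts ⊆ {v}
  · exact Or.inl hv
  right
  rw [Subgraph.connected_iff_forall_exists_walk_subgraph]
  refine ⟨Set.not_subset.mp hv, fun {t₁ t₂} ht₁ ht₂ => ?_⟩
  obtain ⟨H, hH, ht₁H, ht₂H⟩ := Subgraph.exists_mem_verts_of_isChain hc ht₁.1 ht₂.1
  have hHv := (hNC H hH).connected_deleteVerts (hconn H hH) fun h => ht₁.2 (h ht₁H)
  obtain ⟨p, hp⟩ := (Subgraph.connected_iff_forall_exists_walk_subgraph _).mp hHv |>.2
    (⟨ht₁H, ht₁.2⟩ : t₁ ∈ (H.deleteVerts {v}).verts) ⟨ht₂H, ht₂.2⟩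
  exact ⟨p, hp.trans (Subgraph.deleteVerts_mono (le_sSup hH))⟩

lemma exists_isBlock_adj {x y : V} (h : G.Adj x y) : ∃ B : G.Subgraph, IsBlock B ∧ B.Adj x y := by
  obtain ⟨B, hle, hB⟩ := zorn_le_nonempty₀ {H : G.Subgraph | H.Connected ∧ NoCutvertex H}
    (fun c hcS hc H hH => ⟨sSup c,
      ⟨Subgraph.connected_sSup_of_isChain hc ⟨H, hH⟩ fun H' hH' => (hcS hH').1,
        noCutvertex_sSup_of_isChain hc (fun H' hH' => (hcS hH').1) fun H' hH' => (hcS hH').2⟩,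
      fun _ => le_sSup⟩)
    (G.subgraphOfAdj h) ⟨Subgraph.subgraphOfAdj_connected h, noCutvertex_subgraphOfAdj h⟩
  exact ⟨B, ⟨hB.prop.1, hB.prop.2, fun B' hBB' h₁ h₂ => (hB.eq_of_le ⟨h₁, h₂⟩ hBB').symm⟩,
    hle.2 (by simp)⟩

namespace IsBlock

variable {B : G.Subgraph}

lemma toSubgraph_le_of_isPath (hB : IsBlock B) {x y : V} (hx : x ∈ B.verts) (hy : y ∈ B.verts)
    {π : G.Walk x y} (hπ : π.IsPath) : π.toSubgraph ≤ B := by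
  obtain rfl | hxy := eq_or_ne x y
  · rw [Walk.isPath_iff_nil.mp hπ |>.eq_nil]
    simpa using hx
  · have hconn : (B ⊔ π.toSubgraph).Connected := Subgraph.connected_sup hB.1.preconnected
      π.toSubgraph_connected.preconnected ⟨x, hx, π.start_mem_verts_toSubgraph⟩
    exact le_sup_right.trans_eq
      (hB.2.2 _ le_sup_left hconn (hB.2.1.sup_toSubgraph hB.1 hx hy hxy hπ))

lemma eq_of_walks_leaving (hB : IsBlock B) {x y v : V} (hx : x ∈ B.verts) (hy : y ∈ B.verts)
    (p : G.Walk x v) (q : G.Walk y v) (hp : ∀ t ∈ p.support, t ∈ B.verts → t = x)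
    (hq : ∀ t ∈ q.support, t ∈ B.verts → t = y) : x = y := by
  classical
  by_contra hxy
  obtain ⟨π, hπ, hπe⟩ : ∃ π : G.Walk x y, π.IsPath ∧ π.edges ⊆ (p.append q.reverse).edges :=
    ⟨_, Walk.bypass_isPath _, Walk.edges_bypass_subset_edges _⟩
  cases π with
  | nil => exact hxy rfl
  | @cons _ a _ hxa π' =>
    have haB : a ∈ B.verts := (hB.toSubgraph_le_of_isPath hx hy hπ).1 (by simp)
    have hedge := hπe (by simp : s(x, a) ∈ (Walk.cons hxa π').edges)
    rw [Walk.edges_append, Walk.edges_reverse, List.mem_append, List.mem_reverse] at hedge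
    rcases hedge with h | h
    · exact hxa.ne (hp a (p.snd_mem_support_of_mem_edges h) haB).symm
    · exact hxy (hq x (q.fst_mem_support_of_mem_edges h) hx)

lemma dist_coe (hB : IsBlock B) {u v : V} (hu : u ∈ B.verts) (hv : v ∈ B.verts) :
    B.coe.dist ⟨u, hu⟩ ⟨v, hv⟩ = G.dist u v := by
  have hreach : B.coe.Reachable ⟨u, hu⟩ ⟨v, hv⟩ := hB.1.coe.preconnected _ _
  apply le_antisymm
  · obtain ⟨p, hp, hlen⟩ := (hreach.map B.hom).exists_path_of_dist
    obtain ⟨q, rfl⟩ := p.exists_map_hom_eq (hB.toSubgraph_le_of_isPath hu hv hp) hu hv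
    calc B.coe.dist ⟨u, hu⟩ ⟨v, hv⟩ ≤ q.length := dist_le q
      _ = G.dist u v := (Walk.length_map B.hom q).symm.trans hlen
  · obtain ⟨q, hlen⟩ := hreach.exists_walk_length_eq_dist
    rw [← hlen, ← Walk.length_map B.hom]
    exact dist_le _

lemma isShortestPath_map_hom_iff (hB : IsBlock B) {u v : V} (hu : u ∈ B.verts)
    (hv : v ∈ B.verts) (q : B.coe.Walk ⟨u, hu⟩ ⟨v, hv⟩) :
    IsShortestPath (q.map B.hom) ↔ IsShortestPath q := by
  rw [IsShortestPath, IsShortestPath, Walk.isPath_map_iff_of_injective Subgraph.hom_injective,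
    Walk.length_map, hB.dist_coe hu hv]
  rfl

lemma compatible_coe_iff (hB : IsBlock B) (σ : V → V → ℤ) {u v : V} (hu : u ∈ B.verts)
    (hv : v ∈ B.verts) :
    Compatible B.coe (fun x y => σ x.1 y.1) ⟨u, hu⟩ ⟨v, hv⟩ ↔ Compatible G σ u v := by
  constructor
  · intro h p q hp hq
    obtain ⟨p', rfl⟩ := p.exists_map_hom_eq (hB.toSubgraph_le_of_isPath hu hv hp.1) hu hv
    obtain ⟨q', rfl⟩ := q.exists_map_hom_eq (hB.toSubgraph_le_of_isPath hu hv hq.1) hu hv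
    have := h p' q' ((hB.isShortestPath_map_hom_iff hu hv p').mp hp)
      ((hB.isShortestPath_map_hom_iff hu hv q').mp hq)
    exact (walkSign_map σ B.hom p').trans (this.trans (walkSign_map σ B.hom q').symm)
  · intro h p q hp hq
    have := h _ _ ((hB.isShortestPath_map_hom_iff hu hv p).2 hp)
      ((hB.isShortestPath_map_hom_iff hu hv q).2 hq)
    exact (walkSign_map σ B.hom p).symm.trans (this.trans (walkSign_map σ B.hom q))

end IsBlock

lemma isCompatibleGraph_of_forall_isBlock {σ : V → V → ℤ}
    (h : ∀ B : G.Subgraph, IsBlock B → IsCompatibleGraph B.coe (fun x y => σ x.1 y.1)) :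
    IsCompatibleGraph G σ := by
  intro u v p q hp hq
  induction hn : p.length using Nat.strong_induction_on generalizing u p q with
  | _ n ih =>
  cases p with
  | nil =>
    rw [Walk.length_eq_zero_iff.mp (hq.2.trans SimpleGraph.dist_self) |>.eq_nil]
  | @cons _ a _ hua p' =>
    obtain ⟨B, hB, hBua⟩ := exists_isBlock_adj hua
    obtain ⟨z, p₁, p₂, rfl, hzB, hp₂out⟩ :=
      p'.exists_eq_append_forall_mem_support_imp_eq ⟨a, p'.start_mem_support, hBua.snd_mem⟩
    obtain ⟨z', q₁, q₂, rfl, hz'B, hq₂out⟩ :=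
      q.exists_eq_append_forall_mem_support_imp_eq ⟨u, q.start_mem_support, hBua.fst_mem⟩
    obtain rfl : z = z' := hB.eq_of_walks_leaving hzB hz'B p₂ q₂ hp₂out hq₂out
    rw [← Walk.cons_append] at hp hn ⊢
    obtain ⟨hp₁, hp₂⟩ := hp.of_append
    obtain ⟨hq₁, hq₂⟩ := hq.of_append
    have hlt : p₂.length < n := by
      rw [← hn, Walk.length_append, Walk.length_cons]
      omega
    rw [walkSign_append, walkSign_append, ih _ hlt _ p₂ q₂ hp₂ hq₂ rfl,
      (hB.compatible_coe_iff σ hBua.fst_mem hzB).mp (h B hB _ _) _ _ hp₁ hq₁]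

end

theorem compatible_iff_blocks_compatible_general {V : Type*} (G : SimpleGraph V)
    (σ : V → V → ℤ) :
    IsCompatibleGraph G σ ↔
      ∀ B : G.Subgraph, IsBlock B →
        IsCompatibleGraph B.coe (fun x y => σ x.1 y.1) :=
  ⟨fun hG _ hB ⟨u, hu⟩ ⟨v, hv⟩ => (hB.compatible_coe_iff σ hu hv).mpr (hG u v),
    isCompatibleGraph_of_forall_isBlock⟩

/-- A signed graph with connected underlying simple graph is
distance-compatible if and only if every block of it (with the induced signature) is
distance-compatible. -/
theorem compatible_iff_blocks_compatible {V : Type*} (G : SimpleGraph V)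
    (σ : V → V → ℤ) (hσ : IsSignature G σ) (hG : G.Connected) :
    IsCompatibleGraph G σ ↔
      ∀ B : G.Subgraph, IsBlock B →
        IsCompatibleGraph B.coe (fun x y => σ x.1 y.1) :=
  compatible_iff_blocks_compatible_general G σ
end
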